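/- Let (C, C₋, C₊) be a Reedy category and (α, θ) : ([m], X) → ([n], Y) a morphism in ∫N^{-,+}(C). Then the poset {(β, φ) : (α, θ) ≤ (β, φ)} carries the structure of a bounded distributive lattice whose underlying order is the restricted order ≤; in particular any two elements of this poset have a least upper bound and a greatest lower bound in it. -/

import Mathlib

namespace ReedyPaper

open CategoryTheory

universe v₂ u₂ v₁ u₁ v u

variable {C : Type u} [Category.{v} C]

def IsIdMor {x y : C} (f : x ⟶ y) : Prop := ∃ h : x = y, f = eqToHom h

structure ReedyStruct (C : Type u) [Category.{v} C] where
  neg : MorphismProperty C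
  pos : MorphismProperty C
  neg_id : ∀ x : C, neg (𝟙 x)
  pos_id : ∀ x : C, pos (𝟙 x)
  neg_comp : ∀ {x y z : C} (f : x ⟶ y) (g : y ⟶ z), neg f → neg g → neg (f ≫ g)
  pos_comp : ∀ {x y z : C} (f : x ⟶ y) (g : y ⟶ z), pos f → pos g → pos (f ≫ g)
  factor_existsUnique : ∀ {x y : C} (f : x ⟶ y),
    ∃! t : Σ z : C, (x ⟶ z) × (z ⟶ y), neg t.2.1 ∧ pos t.2.2 ∧ t.2.1 ≫ t.2.2 = f
  wf : WellFounded (fun x y : C =>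
    (∃ f : x ⟶ y, pos f ∧ ¬ IsIdMor f) ∨ (∃ f : y ⟶ x, neg f ∧ ¬ IsIdMor f))

structure ChainObj (C : Type u) [Category.{v} C] where
  n : ℕ
  X : Fin (n + 1) ⥤ C

structure ChainHom (P Q : ChainObj C) where
  α : Fin (P.n + 1) →o Fin (Q.n + 1)
  θ : ∀ i : Fin (P.n + 1), P.X.obj i ⟶ Q.X.obj (α i)
  natural : ∀ {i j : Fin (P.n + 1)} (h : i ≤ j),
    P.X.map (homOfLE h) ≫ θ j = θ i ≫ Q.X.map (homOfLE (α.monotone h))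

theorem ChainHom.ext' {P Q : ChainObj C} {f g : ChainHom P Q}
    (hα : f.α = g.α) (hθ : HEq f.θ g.θ) : f = g := by
  cases f; cases g; cases hα; cases hθ; rfl

def ChainHom.id (P : ChainObj C) : ChainHom P P where
  α := OrderHom.id
  θ i := 𝟙 _
  natural h := by exact (Category.comp_id _).trans (Category.id_comp _).symm

def ChainHom.comp {P Q S : ChainObj C} (f : ChainHom P Q) (g : ChainHom Q S) :
    ChainHom P S where
  α := g.α.comp f.α
  θ i := f.θ i ≫ g.θ (f.α i)
  natural {i j} h := by
    show P.X.map (homOfLE h) ≫ f.θ j ≫ g.θ (f.α j) =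
      (f.θ i ≫ g.θ (f.α i)) ≫ S.X.map (homOfLE (g.α.monotone (f.α.monotone h)))
    rw [← Category.assoc, f.natural h, Category.assoc, g.natural (f.α.monotone h),
      ← Category.assoc]

instance : Category (ChainObj C) where
  Hom := ChainHom
  id := ChainHom.id
  comp := ChainHom.comp
  id_comp f := ChainHom.ext' rfl (heq_of_eq (funext fun i => Category.id_comp _))
  comp_id f := ChainHom.ext' rfl (heq_of_eq (funext fun i => Category.comp_id _))
  assoc f g h := ChainHom.ext' rfl (heq_of_eq (funext fun i => Category.assoc _ _ _))

/-- The partial order on the hom-sets of `∫N(C)` (and of `∫N^{-,+}(C)`):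
`(α, θ) ≤ (α', θ')` iff `α ≤ α'` pointwise and `θ'ᵢ = Y(α(i) ≤ α'(i)) ∘ θᵢ` for all `i`. -/
def ChainHom.le {P Q : ChainObj C} (f g : ChainHom P Q) : Prop :=
  (∀ i, f.α i ≤ g.α i) ∧
    ∀ (i : Fin (P.n + 1)) (h : f.α i ≤ g.α i), g.θ i = f.θ i ≫ Q.X.map (homOfLE h)

theorem ChainHom.le_comp_right {P Q S : ChainObj C} {f f' : P ⟶ Q} (g : Q ⟶ S)
    (h : ChainHom.le f f') : ChainHom.le (f ≫ g) (f' ≫ g) := by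
  refine ⟨fun i => g.α.monotone (h.1 i), fun i hi => ?_⟩
  show f'.θ i ≫ g.θ (f'.α i) = (f.θ i ≫ g.θ (f.α i)) ≫ S.X.map (homOfLE hi)
  rw [h.2 i (h.1 i), Category.assoc, g.natural (h.1 i), ← Category.assoc]
  rfl

theorem ChainHom.le_comp_left {P Q S : ChainObj C} (f : P ⟶ Q) {g g' : Q ⟶ S}
    (h : ChainHom.le g g') : ChainHom.le (f ≫ g) (f ≫ g') := by
  refine ⟨fun i => h.1 (f.α i), fun i hi => ?_⟩
  show f.θ i ≫ g'.θ (f.α i) = (f.θ i ≫ g.θ (f.α i)) ≫ S.X.map (homOfLE hi)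
  rw [h.2 (f.α i) (h.1 (f.α i)), ← Category.assoc]
  rfl

/-- Objects of `∫N^{-,+}(C)`: chains all of whose morphisms lie in `C₋`. -/
structure NegObj (R : ReedyStruct C) where
  n : ℕ
  X : Fin (n + 1) ⥤ C
  negMap : ∀ {i j : Fin (n + 1)} (h : i ≤ j), R.neg (X.map (homOfLE h))

variable {R : ReedyStruct C}

/-- The underlying object of `∫N(C)`. -/
def NegObj.chain (P : NegObj R) : ChainObj C := ⟨P.n, P.X⟩

/-- Morphisms of `∫N^{-,+}(C)`: morphisms of `∫N(C)` all of whose components lie in `C₊`. -/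
def NegHomT (P Q : NegObj R) : Type v :=
  { f : P.chain ⟶ Q.chain // ∀ i, R.pos (f.θ i) }

def NegHomT.id (P : NegObj R) : NegHomT P P := ⟨𝟙 P.chain, fun _ => R.pos_id _⟩

def NegHomT.comp {P Q S : NegObj R} (f : NegHomT P Q) (g : NegHomT Q S) : NegHomT P S :=
  ⟨f.1 ≫ g.1, fun i => by
    show R.pos (f.1.θ i ≫ g.1.θ (f.1.α i))
    exact R.pos_comp _ _ (f.2 i) (g.2 _)⟩

theorem NegHomT.id_comp {P Q : NegObj R} (f : NegHomT P Q) : (NegHomT.id P).comp f = f := by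
  apply Subtype.ext
  show 𝟙 P.chain ≫ f.1 = f.1
  exact Category.id_comp f.1

theorem NegHomT.comp_id {P Q : NegObj R} (f : NegHomT P Q) : f.comp (NegHomT.id Q) = f := by
  apply Subtype.ext
  show f.1 ≫ 𝟙 Q.chain = f.1
  exact Category.comp_id f.1

theorem NegHomT.comp_assoc {P Q S T : NegObj R} (f : NegHomT P Q) (g : NegHomT Q S)
    (h : NegHomT S T) : (f.comp g).comp h = f.comp (g.comp h) := by
  apply Subtype.ext
  show (f.1 ≫ g.1) ≫ h.1 = f.1 ≫ (g.1 ≫ h.1)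
  exact Category.assoc f.1 g.1 h.1

/-- The category `∫N^{-,+}(C)`. -/
instance : Category (NegObj R) where
  Hom := NegHomT
  id := NegHomT.id
  comp := NegHomT.comp
  id_comp := NegHomT.id_comp
  comp_id := NegHomT.comp_id
  assoc := NegHomT.comp_assoc

/-- The order on the hom-sets of `∫N^{-,+}(C)`. -/
def NegHom.le {P Q : NegObj R} (f g : P ⟶ Q) : Prop := ChainHom.le f.1 g.1

/-- The equivalence relation `∼` on the hom-sets of `∫N^{-,+}(C)`: the
symmetric-transitive closure of `≤`. -/
def NegHom.equiv {P Q : NegObj R} (f g : P ⟶ Q) : Prop :=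
  Relation.EqvGen (fun a b : P ⟶ Q => NegHom.le a b) f g

theorem NegHom.le_comp_right {P Q S : NegObj R} {f f' : P ⟶ Q} (g : Q ⟶ S)
    (h : NegHom.le f f') : NegHom.le (f ≫ g) (f' ≫ g) :=
  ChainHom.le_comp_right g.1 h

theorem NegHom.le_comp_left {P Q S : NegObj R} (f : P ⟶ Q) {g g' : Q ⟶ S}
    (h : NegHom.le g g') : NegHom.le (f ≫ g) (f ≫ g') :=
  ChainHom.le_comp_left f.1 h

/-- Identity-reflectingness of a chain. -/
def NegObj.IdRefl (P : NegObj R) : Prop :=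
  ∀ {i j : Fin (P.n + 1)} (h : i ≤ j), IsIdMor (P.X.map (homOfLE h)) → i = j

/-- Objects of `∫N^{--,+}_+(C)`: identity-reflecting chains in `C₋`. -/
structure StrictObj (R : ReedyStruct C) where
  toNegObj : NegObj R
  idRefl : toNegObj.IdRefl

/-- Morphisms of `∫N^{--,+}_+(C)`: morphisms of `∫N^{-,+}(C)` with `α` injective. -/
def StrictHomT (P Q : StrictObj R) : Type v :=
  { f : P.toNegObj ⟶ Q.toNegObj // Function.Injective f.1.α }

def StrictHomT.id (P : StrictObj R) : StrictHomT P P :=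
  ⟨𝟙 P.toNegObj, fun _ _ h => h⟩

def StrictHomT.comp {P Q S : StrictObj R} (f : StrictHomT P Q) (g : StrictHomT Q S) :
    StrictHomT P S :=
  ⟨f.1 ≫ g.1, fun _ _ h => f.2 (g.2 h)⟩

/-- The category `∫N^{--,+}_+(C)`. -/
instance : Category (StrictObj R) where
  Hom := StrictHomT
  id := StrictHomT.id
  comp := StrictHomT.comp
  id_comp f := Subtype.ext (Category.id_comp f.1)
  comp_id f := Subtype.ext (Category.comp_id f.1)
  assoc f g h := Subtype.ext (Category.assoc f.1 g.1 h.1)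

/-- The order on the hom-sets of `∫N^{--,+}_+(C)`. -/
def StrictHom.le {P Q : StrictObj R} (f g : P ⟶ Q) : Prop := NegHom.le f.1 g.1

/-- The equivalence relation `∼` on the hom-sets of `∫N^{--,+}_+(C)`. -/
def StrictHom.equiv {P Q : StrictObj R} (f g : P ⟶ Q) : Prop :=
  Relation.EqvGen (fun a b : P ⟶ Q => StrictHom.le a b) f g

theorem StrictHom.le_comp_right {P Q S : StrictObj R} {f f' : P ⟶ Q} (g : Q ⟶ S)
    (h : StrictHom.le f f') : StrictHom.le (f ≫ g) (f' ≫ g) :=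
  NegHom.le_comp_right g.1 h

theorem StrictHom.le_comp_left {P Q S : StrictObj R} (f : P ⟶ Q) {g g' : Q ⟶ S}
    (h : StrictHom.le g g') : StrictHom.le (f ≫ g) (f ≫ g') :=
  NegHom.le_comp_left f.1 h

/-- Objects of `Down_*(C)`: the same as those of `∫N^{-,+}(C)`. -/
structure DownStar (R : ReedyStruct C) where
  obj : NegObj R

/-- The category `Down_*(C)`: hom-sets are the quotients of those of `∫N^{-,+}(C)`
by the symmetric-transitive closure of `≤`. -/
instance : Category (DownStar R) where
  Hom P Q := Quot (fun f g : P.obj ⟶ Q.obj => NegHom.le f g)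
  id P := Quot.mk _ (𝟙 P.obj)
  comp {P Q S} f g :=
    Quot.lift
      (fun f' => Quot.lift (fun g' => Quot.mk _ (f' ≫ g'))
        (fun _ _ hg => Quot.sound (NegHom.le_comp_left f' hg)) g)
      (fun f₁ f₂ hf => Quot.inductionOn g (fun g' =>
        Quot.sound (NegHom.le_comp_right g' hf))) f
  id_comp f := Quot.inductionOn f fun f' => congrArg (Quot.mk _) (Category.id_comp f')
  comp_id f := Quot.inductionOn f fun f' => congrArg (Quot.mk _) (Category.comp_id f')
  assoc f g h :=
    Quot.inductionOn f fun f' => Quot.inductionOn g fun g' => Quot.inductionOn h fun h' =>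
      congrArg (Quot.mk _) (Category.assoc f' g' h')

/-- Objects of `Down(C)`: the same as those of `∫N^{--,+}_+(C)`. -/
structure Down (R : ReedyStruct C) where
  obj : StrictObj R

/-- The category `Down(C)`: hom-sets are the quotients of those of `∫N^{--,+}_+(C)`
by the symmetric-transitive closure of `≤`. -/
instance : Category (Down R) where
  Hom P Q := Quot (fun f g : P.obj ⟶ Q.obj => StrictHom.le f g)
  id P := Quot.mk _ (𝟙 P.obj)
  comp {P Q S} f g :=
    Quot.lift
      (fun f' => Quot.lift (fun g' => Quot.mk _ (f' ≫ g'))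
        (fun _ _ hg => Quot.sound (StrictHom.le_comp_left f' hg)) g)
      (fun f₁ f₂ hf => Quot.inductionOn g (fun g' =>
        Quot.sound (StrictHom.le_comp_right g' hf))) f
  id_comp f := Quot.inductionOn f fun f' => congrArg (Quot.mk _) (Category.id_comp f')
  comp_id f := Quot.inductionOn f fun f' => congrArg (Quot.mk _) (Category.comp_id f')
  assoc f g h :=
    Quot.inductionOn f fun f' => Quot.inductionOn g fun g' => Quot.inductionOn h fun h' =>
      congrArg (Quot.mk _) (Category.assoc f' g' h')

/-- The quotient functor `∫N^{-,+}(C) → Down_*(C)`. -/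
def qStar (R : ReedyStruct C) : NegObj R ⥤ DownStar R where
  obj P := ⟨P⟩
  map f := Quot.mk _ f
  map_id _ := rfl
  map_comp _ _ := rfl

/-- The inclusion functor `Down(C) → Down_*(C)`. -/
def downInclusion (R : ReedyStruct C) : Down R ⥤ DownStar R where
  obj P := ⟨P.obj.toNegObj⟩
  map {P Q} f :=
    Quot.lift (fun f' : P.obj ⟶ Q.obj => Quot.mk _ f'.1) (fun _ _ h => Quot.sound h) f
  map_id _ := rfl
  map_comp {P Q S} f g := by
    induction f using Quot.ind
    induction g using Quot.ind
    rfl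

/-- The last-component functor `∫N(C) → C`. -/
def lastChain : ChainObj C ⥤ C where
  obj P := P.X.obj (Fin.last P.n)
  map {P Q} f := f.θ (Fin.last P.n) ≫ Q.X.map (homOfLE (Fin.le_last (f.α (Fin.last P.n))))
  map_id P := by
    show 𝟙 (P.X.obj (Fin.last P.n)) ≫ P.X.map (homOfLE (Fin.le_last (Fin.last P.n))) = 𝟙 _
    rw [Category.id_comp]
    exact P.X.map_id _
  map_comp {P Q S} f g := by
    show (f.θ (Fin.last P.n) ≫ g.θ (f.α (Fin.last P.n))) ≫
        S.X.map (homOfLE (Fin.le_last (g.α (f.α (Fin.last P.n))))) =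
      (f.θ (Fin.last P.n) ≫ Q.X.map (homOfLE (Fin.le_last (f.α (Fin.last P.n))))) ≫
        g.θ (Fin.last Q.n) ≫ S.X.map (homOfLE (Fin.le_last (g.α (Fin.last Q.n))))
    rw [Category.assoc, Category.assoc, ← Category.assoc (Q.X.map _),
      g.natural (Fin.le_last (f.α (Fin.last P.n))), Category.assoc, ← Functor.map_comp,
      homOfLE_comp]

theorem lastChain_eq_of_le {P Q : ChainObj C} {f g : P ⟶ Q} (h : ChainHom.le f g) :
    lastChain.map f = lastChain.map g := by
  show f.θ (Fin.last P.n) ≫ Q.X.map (homOfLE (Fin.le_last (f.α (Fin.last P.n)))) =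
    g.θ (Fin.last P.n) ≫ Q.X.map (homOfLE (Fin.le_last (g.α (Fin.last P.n))))
  rw [h.2 (Fin.last P.n) (h.1 (Fin.last P.n)), Category.assoc, ← Functor.map_comp,
    homOfLE_comp]

/-- The forgetful functor `∫N^{-,+}(C) → ∫N(C)`. -/
def negForget (R : ReedyStruct C) : NegObj R ⥤ ChainObj C where
  obj P := P.chain
  map f := f.1
  map_id _ := rfl
  map_comp _ _ := rfl

/-- The last-component functor `∫N^{-,+}(C) → C`. -/
def lastNeg (R : ReedyStruct C) : NegObj R ⥤ C := negForget R ⋙ lastChain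

/-- The forgetful functor `∫N^{--,+}_+(C) → ∫N^{-,+}(C)`. -/
def strictForget (R : ReedyStruct C) : StrictObj R ⥤ NegObj R where
  obj P := P.toNegObj
  map f := f.1
  map_id _ := rfl
  map_comp _ _ := rfl

/-- The last-component functor `∫N^{--,+}_+(C) → C`. -/
def lastStrict (R : ReedyStruct C) : StrictObj R ⥤ C := strictForget R ⋙ lastNeg R

/-- The last-component functor `Down_*(C) → C`. -/
def lastDownStar (R : ReedyStruct C) : DownStar R ⥤ C where
  obj P := (lastNeg R).obj P.obj
  map {P Q} f :=
    Quot.lift (fun f' : P.obj ⟶ Q.obj => (lastNeg R).map f')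
      (fun _ _ h => lastChain_eq_of_le h) f
  map_id P := (lastNeg R).map_id P.obj
  map_comp {P Q S} f g := by
    induction f using Quot.ind
    induction g using Quot.ind
    exact (lastNeg R).map_comp _ _

/-- The last-component functor `Down(C) → C`. -/
def lastDown (R : ReedyStruct C) : Down R ⥤ C where
  obj P := (lastStrict R).obj P.obj
  map {P Q} f :=
    Quot.lift (fun f' : P.obj ⟶ Q.obj => (lastStrict R).map f')
      (fun _ _ h => lastChain_eq_of_le h) f
  map_id P := (lastStrict R).map_id P.obj
  map_comp {P Q S} f g := by
    induction f using Quot.ind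
    induction g using Quot.ind
    exact (lastStrict R).map_comp _ _

/-- The wide subcategory `Γ₋` of `∫N^{-,+}(C)`: morphisms of the form
`(σ, id) : ([m], X ∘ σ) → ([n], X)` with `σ` surjective, i.e. morphisms whose simplicial
component is surjective and all of whose components are identities. -/
def GammaNeg (R : ReedyStruct C) {P Q : NegObj R} (f : P ⟶ Q) : Prop :=
  Function.Surjective f.1.α ∧ ∀ i, IsIdMor (f.1.θ i)

/-- The wide subcategory `Γ₊` of `∫N^{-,+}(C)`: morphisms `(δ, θ)` with `δ` injective. -/
def GammaPos (R : ReedyStruct C) {P Q : NegObj R} (f : P ⟶ Q) : Prop :=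
  Function.Injective f.1.α

/-- Whiskering (precomposition) with `lastF` is bijective on natural transformations
between functors out of `C`. -/
def WhiskerUnique {Γ : Type u₁} [Category.{v₁} Γ] (lastF : Γ ⥤ C) : Prop :=
  ∀ {D : Type u₂} [Category.{v₂} D] (F G : C ⥤ D)
    (ε : lastF ⋙ F ⟶ lastF ⋙ G), ∃! ε' : F ⟶ G, Functor.whiskerLeft lastF ε' = ε

/-- `lastF : Γ ⥤ C` is a weak 1-localization of `Γ` at the `last`-weak equivalences
(the morphisms sent by `lastF` to identities). -/
def IsWeakLocalizationAtLastWeq {Γ : Type u₁} [Category.{v₁} Γ] (lastF : Γ ⥤ C) : Prop :=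
  (∀ {P Q : Γ} (f : P ⟶ Q), IsIdMor (lastF.map f) → IsIso (lastF.map f)) ∧
  (∀ {E : Type u₂} [Category.{v₂} E] (G : Γ ⥤ E),
    (∀ {P Q : Γ} (f : P ⟶ Q), IsIdMor (lastF.map f) → IsIso (G.map f)) →
    ∃ H : C ⥤ E, Nonempty (lastF ⋙ H ≅ G)) ∧
  (∀ {E : Type u₂} [Category.{v₂} E] (H H' : C ⥤ E) (θ : lastF ⋙ H ≅ lastF ⋙ H'),
    ∃! θ' : H ≅ H', Functor.isoWhiskerLeft lastF θ' = θ)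

/-!
A morphism `g ≥ f = (α, θ)` is determined by its simplicial component `β ≥ α`, since then
`g.θ i = θ i ≫ Y(α i ≤ β i)`. Conversely every monotone `β ≥ α` for which these composites
lie in `C₊` arises this way. That condition is imposed separately at each `i`, and `max`, `min`
of two values always return one of them, so the admissible `β` form a sublattice of the
distributive lattice of all maps `[m] → [n]`. This finite lattice contains `f`, hence is bounded.
-/

namespace ChainHom

variable {P Q : ChainObj C}

theorem le_refl (f : ChainHom P Q) : f.le f :=
  ⟨fun _ => le_rfl, fun _ _ => by simp⟩

theorem le_trans {f g h : ChainHom P Q} (hfg : f.le g) (hgh : g.le h) : f.le h :=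
  ⟨fun i => (hfg.1 i).trans (hgh.1 i), fun i _ => by
    rw [hgh.2 i (hgh.1 i), hfg.2 i (hfg.1 i), Category.assoc, ← Functor.map_comp, homOfLE_comp]⟩

theorem eq_of_le_of_α_eq {f g g' : ChainHom P Q} (hg : f.le g) (hg' : f.le g')
    (hα : g.α = g'.α) : g = g' := by
  obtain ⟨α, θ, _⟩ := g
  obtain ⟨α', θ', _⟩ := g'
  change α = α' at hα
  subst hα
  congr 1
  funext i
  exact (hg.2 i (hg.1 i)).trans (hg'.2 i (hg'.1 i)).symm

theorem le_antisymm {f g : ChainHom P Q} (hfg : f.le g) (hgf : g.le f) : f = g :=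
  eq_of_le_of_α_eq (le_refl f) hfg
    (OrderHom.ext _ _ (funext fun i => (hfg.1 i).antisymm (hgf.1 i)))

theorem le_iff_α_le_of_le {f g g' : ChainHom P Q} (hg : f.le g) (hg' : f.le g') :
    g.le g' ↔ ∀ i, g.α i ≤ g'.α i := by
  refine ⟨fun h => h.1, fun h => ⟨h, fun i _ => ?_⟩⟩
  rw [hg'.2 i (hg'.1 i), hg.2 i (hg.1 i), Category.assoc, ← Functor.map_comp, homOfLE_comp]

def extend (f : ChainHom P Q) (β : Fin (P.n + 1) →o Fin (Q.n + 1)) (hβ : ∀ i, f.α i ≤ β i) :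
    ChainHom P Q where
  α := β
  θ i := f.θ i ≫ Q.X.map (homOfLE (hβ i))
  natural h := by
    rw [← Category.assoc, f.natural h, Category.assoc, ← Functor.map_comp, homOfLE_comp,
      Category.assoc, ← Functor.map_comp, homOfLE_comp]

theorem le_extend (f : ChainHom P Q) (β : Fin (P.n + 1) →o Fin (Q.n + 1))
    (hβ : ∀ i, f.α i ≤ β i) : f.le (f.extend β hβ) :=
  ⟨hβ, fun _ _ => rfl⟩

end ChainHom

namespace NegHom

variable {P Q : NegObj R}

abbrev partialOrder (P Q : NegObj R) : PartialOrder (P ⟶ Q) where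
  le := NegHom.le
  le_refl f := ChainHom.le_refl f.1
  le_trans _ _ _ := ChainHom.le_trans
  le_antisymm _ _ hfg hgf := Subtype.ext (ChainHom.le_antisymm hfg hgf)

attribute [local instance] partialOrder

/-- `j` is the value at `i` of some morphism above `f`. -/
def Admissible (f : P ⟶ Q) (i : Fin (P.n + 1)) (j : Fin (Q.n + 1)) : Prop :=
  ∃ h : f.1.α i ≤ j, R.pos (f.1.θ i ≫ Q.chain.X.map (homOfLE h))

theorem admissible_of_le {f g : P ⟶ Q} (hfg : f ≤ g) (i : Fin (P.n + 1)) :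
    Admissible f i (g.1.α i) :=
  ⟨hfg.1 i, hfg.2 i (hfg.1 i) ▸ g.2 i⟩

theorem Admissible.max {f : P ⟶ Q} {i : Fin (P.n + 1)} {j k : Fin (Q.n + 1)}
    (hj : Admissible f i j) (hk : Admissible f i k) : Admissible f i (j ⊔ k) := by
  rcases max_choice j k with e | e <;> rw [e] <;> assumption

theorem Admissible.min {f : P ⟶ Q} {i : Fin (P.n + 1)} {j k : Fin (Q.n + 1)}
    (hj : Admissible f i j) (hk : Admissible f i k) : Admissible f i (j ⊓ k) := by
  rcases min_choice j k with e | e <;> rw [e] <;> assumption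

def extend (f : P ⟶ Q) (β : Fin (P.n + 1) →o Fin (Q.n + 1))
    (hβ : ∀ i, Admissible f i (β i)) : P ⟶ Q :=
  ⟨f.1.extend β fun i => (hβ i).1, fun i => (hβ i).2⟩

theorem le_extend (f : P ⟶ Q) (β : Fin (P.n + 1) →o Fin (Q.n + 1))
    (hβ : ∀ i, Admissible f i (β i)) : f ≤ extend f β hβ :=
  ChainHom.le_extend f.1 β _

section Above

variable (f : P ⟶ Q)

def aboveα (g : {g : P ⟶ Q // NegHom.le f g}) : Fin (P.n + 1) → Fin (Q.n + 1) := g.1.1.α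

theorem aboveα_injective : Function.Injective (aboveα f) := fun g g' h =>
  Subtype.ext <| Subtype.ext <| ChainHom.eq_of_le_of_α_eq g.2 g'.2 (OrderHom.ext _ _ h)

theorem aboveα_le_aboveα {g g' : {g : P ⟶ Q // NegHom.le f g}} :
    aboveα f g ≤ aboveα f g' ↔ g ≤ g' :=
  (ChainHom.le_iff_α_le_of_le g.2 g'.2).symm

def aboveSup (g g' : {g : P ⟶ Q // NegHom.le f g}) : {g : P ⟶ Q // NegHom.le f g} :=
  ⟨extend f (g.1.1.α ⊔ g'.1.1.α) fun i =>
    (admissible_of_le g.2 i).max (admissible_of_le g'.2 i), le_extend _ _ _⟩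

def aboveInf (g g' : {g : P ⟶ Q // NegHom.le f g}) : {g : P ⟶ Q // NegHom.le f g} :=
  ⟨extend f (g.1.1.α ⊓ g'.1.1.α) fun i =>
    (admissible_of_le g.2 i).min (admissible_of_le g'.2 i), le_extend _ _ _⟩

noncomputable abbrev aboveDistribLattice : DistribLattice {g : P ⟶ Q // NegHom.le f g} :=
  letI : Max {g : P ⟶ Q // NegHom.le f g} := ⟨aboveSup f⟩
  letI : Min {g : P ⟶ Q // NegHom.le f g} := ⟨aboveInf f⟩
  (aboveα_injective f).distribLattice _ (aboveα_le_aboveα f)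
    (by simp only [lt_iff_le_not_ge, aboveα_le_aboveα, implies_true])
    (fun _ _ => rfl) (fun _ _ => rfl)

theorem finite_above : Finite {g : P ⟶ Q // NegHom.le f g} :=
  Finite.of_injective _ (aboveα_injective f)

end Above

end NegHom

section Statements

variable (R : ReedyStruct C)

theorem statement6 {P Q : NegObj R} (f : P ⟶ Q) :
    ∃ L : DistribLattice {g : P ⟶ Q // NegHom.le f g},
      letI := L
      ∃ _ : BoundedOrder {g : P ⟶ Q // NegHom.le f g},
        ∀ a b : {g : P ⟶ Q // NegHom.le f g}, a ≤ b ↔ NegHom.le a.1 b.1 := by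
  let L := NegHom.aboveDistribLattice f
  have := NegHom.finite_above f
  have : Nonempty {g : P ⟶ Q // NegHom.le f g} := ⟨⟨f, ChainHom.le_refl f.1⟩⟩
  have := Fintype.ofFinite {g : P ⟶ Q // NegHom.le f g}
  exact ⟨L, Fintype.toBoundedOrder _, fun _ _ => Iff.rfl⟩

end Statements

end ReedyPaper
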